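/- Let G be a finite commutative group with |G| = q, and let A, A′ ⊆ G be standard complements. Then λ(A) · λ(A′) = 1/q, λ⁻(A) · λ⁺(A′) = 1/q, and λ±(A) · λ±(A′) = 1/q. -/

import Mathlib

open scoped Pointwise ComplexOrder

noncomputable section

def IsStandard {G : Type*} [AddCommGroup G] (A : Set G) : Prop :=
  A = -A ∧ (0 : G) ∈ A

def Delta {G : Type*} [AddCommGroup G] (A : Set G) : ℕ :=
  sSup {n | ∃ B : Finset G, ((B : Set G) - (B : Set G)) ∩ A = {0} ∧ B.card = n}

def DeltaBar {G : Type*} [AddCommGroup G] (A : Set G) : ℕ :=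
  sSup {n | ∃ B : Finset G, ((B : Set G) - (B : Set G)) ⊆ A ∧ B.card = n}

def deltaL {G : Type*} [AddCommGroup G] [Fintype G] (A : Set G) : ℝ :=
  (Delta A : ℝ) / (Fintype.card G : ℝ)

def deltaU {G : Type*} [AddCommGroup G] (A : Set G) : ℝ :=
  1 / (DeltaBar A : ℝ)

def ftrans {G : Type*} [AddCommGroup G] [Fintype G] (f : G → ℝ) (γ : AddChar G Circle) : ℂ :=
  ∑ x, (γ x : ℂ) * (f x : ℂ)

def PosFT {G : Type*} [AddCommGroup G] [Fintype G] (f : G → ℝ) : Prop :=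
  ∀ γ : AddChar G Circle, 0 ≤ ftrans f γ

def lamSet {G : Type*} [AddCommGroup G] [Fintype G] (S : Set (G → ℝ)) : Set ℝ :=
  {r | ∃ f ∈ S, PosFT f ∧ (∑ x, f x) ≠ 0 ∧ r = f 0 / ∑ x, f x}

def lam {G : Type*} [AddCommGroup G] [Fintype G] (A : Set G) : ℝ :=
  sInf (lamSet {f | f ≠ 0 ∧ ∀ x ∉ A, f x = 0})

def lamMinus {G : Type*} [AddCommGroup G] [Fintype G] (A : Set G) : ℝ :=
  sInf (lamSet {f | f ≠ 0 ∧ ∀ x ∉ A, f x ≤ 0})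

def lamPlus {G : Type*} [AddCommGroup G] [Fintype G] (A : Set G) : ℝ :=
  sInf (lamSet {f | f ≠ 0 ∧ (∀ x ∉ A, f x = 0) ∧ ∀ x ∈ A, 0 ≤ f x})

def lamPM {G : Type*} [AddCommGroup G] [Fintype G] (A : Set G) : ℝ :=
  sInf (lamSet {f | f ≠ 0 ∧ (∀ x ∉ A, f x ≤ 0) ∧ ∀ x ∈ A, 0 ≤ f x})

/-!
All four classes have the form `{f ≠ 0 | f ≤ 0 on N, f ≥ 0 on P}` with `N = Aᶜ` and `P` one of
`Aᶜ, ∅, univ, A`; passing to the complement `A'` replaces `N` by `Nᶜ \ {0}` and `P` by `Pᶜ` away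
from `0`.

Lower bound: if `f, g` have nonnegative Fourier transform and `f g ≤ 0` off `0`, Parseval gives
`(∑ f) (∑ g) ≤ q ∑ f g ≤ q f(0) g(0)`.

Upper bound: `λ` is the value of a finite linear program in `f`, whose constraints `Re f̂(γ) ≥ 0`
suffice because only the even part of `f` matters. By Farkas' lemma
`δ₀ - λ = F + r` with `F` a nonnegative combination of the cosines `Re γ` and `r ≥ 0` off `N`,
`r ≤ 0` off `P`. Then `g = F + λ` lies in the complementary class, with `g(0) ≤ 1` and
`∑ g ≥ q λ`, so `λ' ≤ 1 / (q λ)`.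
-/

open Set
open scoped Matrix

lemma le_csInf_mul_csInf {X Y : Set ℝ} {c : ℝ} (hc : 0 < c) (hX : X.Nonempty) (hY : Y.Nonempty)
    (hYpos : ∀ s ∈ Y, 0 < s) (h : ∀ r ∈ X, ∀ s ∈ Y, c ≤ r * s) : c ≤ sInf X * sInf Y := by
  have hcX : ∀ s ∈ Y, c / s ≤ sInf X := fun s hs =>
    le_csInf hX fun r hr => (div_le_iff₀ (hYpos s hs)).2 (h r hr s hs)
  obtain ⟨s₀, hs₀⟩ := hY
  have hXpos : 0 < sInf X := (div_pos hc (hYpos s₀ hs₀)).trans_le (hcX s₀ hs₀)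
  rw [← div_le_iff₀' hXpos]
  exact le_csInf ⟨s₀, hs₀⟩ fun s hs => (div_le_iff₀' hXpos).2 <|
    (div_le_iff₀ (hYpos s hs)).1 (hcX s hs)

section ConicHull

variable {E : Type*} [AddCommGroup E] [Module ℝ E]

lemma mem_hull_range_iff {ι : Type*} [Fintype ι] {v : ι → E} {x : E} :
    x ∈ PointedCone.hull ℝ (range v) ↔ ∃ c : ι → ℝ, 0 ≤ c ∧ ∑ i, c i • v i = x := by
  rw [Submodule.mem_span_range_iff_exists_fun]
  constructor
  · rintro ⟨c, rfl⟩
    exact ⟨fun i => c i, fun i => (c i).2, rfl⟩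
  · rintro ⟨c, hc, rfl⟩
    exact ⟨fun i => ⟨c i, hc i⟩, rfl⟩

lemma exists_sum_smul_eq_zero_of_not_linearIndependent {ι : Type*} [Fintype ι] {v : ι → E}
    (hv : ¬ LinearIndependent ℝ v) : ∃ d : ι → ℝ, ∑ i, d i • v i = 0 ∧ ∃ i, d i < 0 := by
  obtain ⟨d, hd, i, hi⟩ := Fintype.not_linearIndependent_iff.1 hv
  rcases hi.lt_or_gt with hi | hi
  · exact ⟨d, hd, i, hi⟩
  · exact ⟨-d, by simp [neg_smul, hd], i, by simpa using hi⟩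

/-- Carathéodory's argument for cones: move along a linear dependence until a coefficient
vanishes. -/
lemma exists_nonneg_coeff_eq_zero_of_not_linearIndependent {ι : Type*} [Fintype ι] {v : ι → E}
    (hv : ¬ LinearIndependent ℝ v) {c : ι → ℝ} (hc : 0 ≤ c) :
    ∃ c' : ι → ℝ, 0 ≤ c' ∧ (∃ j, c' j = 0) ∧ ∑ i, c' i • v i = ∑ i, c i • v i := by
  classical
  obtain ⟨d, hd, hneg⟩ := exists_sum_smul_eq_zero_of_not_linearIndependent hv
  obtain ⟨j, hj, hmin⟩ := Finset.exists_min_image {i | d i < 0} (fun i => c i / -d i)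
    (by obtain ⟨i, hi⟩ := hneg; exact ⟨i, by simpa using hi⟩)
  simp only [Finset.mem_filter, Finset.mem_univ, true_and] at hj hmin
  set t := c j / -d j
  have ht : 0 ≤ t := div_nonneg (hc j) (by linarith)
  refine ⟨c + t • d, fun i => ?_, ⟨j, ?_⟩, ?_⟩
  · rcases lt_or_ge (d i) 0 with hi | hi
    · have := (le_div_iff₀ (neg_pos.2 hi)).1 (hmin i hi)
      simp only [Pi.add_apply, Pi.smul_apply, smul_eq_mul, Pi.zero_apply]
      linarith
    · exact add_nonneg (hc i) (mul_nonneg ht hi)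
  · simp only [Pi.add_apply, Pi.smul_apply, smul_eq_mul, t]
    rw [div_neg, neg_mul, div_mul_cancel₀ _ hj.ne, add_neg_cancel]
  · simp only [Pi.add_apply, Pi.smul_apply, smul_eq_mul, add_smul, mul_smul,
      Finset.sum_add_distrib, ← Finset.smul_sum, hd, smul_zero, add_zero]

lemma hull_range_eq_iUnion_of_not_linearIndependent {n : ℕ} {v : Fin (n + 1) → E}
    (hv : ¬ LinearIndependent ℝ v) :
    (PointedCone.hull ℝ (range v) : Set E) =
      ⋃ j : Fin (n + 1), PointedCone.hull ℝ (range (v ∘ j.succAbove)) := by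
  refine Subset.antisymm (fun x hx => ?_) (iUnion_subset fun j =>
    SetLike.coe_subset_coe.2 (Submodule.span_mono (range_comp_subset_range _ _)))
  obtain ⟨c, hc, rfl⟩ := mem_hull_range_iff.1 hx
  obtain ⟨c', hc', ⟨j, hj⟩, hsum⟩ := exists_nonneg_coeff_eq_zero_of_not_linearIndependent hv hc
  refine mem_iUnion.2 ⟨j, mem_hull_range_iff.2 ⟨c' ∘ j.succAbove, fun i => hc' _, ?_⟩⟩
  rw [← hsum, Fin.sum_univ_succAbove _ j, hj, zero_smul, zero_add]
  rfl

variable [TopologicalSpace E] [IsTopologicalAddGroup E] [ContinuousSMul ℝ E] [T2Space E]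

lemma isClosed_hull_range_of_linearIndependent {ι : Type*} [Fintype ι] {v : ι → E}
    (hv : LinearIndependent ℝ v) : IsClosed (PointedCone.hull ℝ (range v) : Set E) := by
  have himage :
      (PointedCone.hull ℝ (range v) : Set E) = Fintype.linearCombination ℝ v '' Ici 0 := by
    ext x
    simp [mem_hull_range_iff, Fintype.linearCombination_apply]
  rw [himage]
  exact (LinearMap.isClosedEmbedding_of_injective (LinearMap.ker_eq_bot.2
    (linearIndependent_iff_injective_fintypeLinearCombination.1 hv))).isClosedMap _ isClosed_Ici

lemma isClosed_hull_range_fin : ∀ {n : ℕ} (v : Fin n → E),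
    IsClosed (PointedCone.hull ℝ (range v) : Set E)
  | 0, v => isClosed_hull_range_of_linearIndependent linearIndependent_empty_type
  | n + 1, v => by
    by_cases hv : LinearIndependent ℝ v
    · exact isClosed_hull_range_of_linearIndependent hv
    · rw [hull_range_eq_iUnion_of_not_linearIndependent hv]
      exact isClosed_iUnion_of_finite fun j => isClosed_hull_range_fin _

lemma isClosed_hull_of_finite {s : Set E} (hs : s.Finite) :
    IsClosed (PointedCone.hull ℝ s : Set E) := by
  obtain ⟨n, v, -, rfl⟩ := hs.fin_param
  exact isClosed_hull_range_fin v

end ConicHull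

/-- Farkas' lemma. -/
theorem mem_hull_of_forall_dotProduct_nonneg {κ : Type*} [Fintype κ] {s : Set (κ → ℝ)}
    (hs : s.Finite) {h : κ → ℝ} (H : ∀ f : κ → ℝ, (∀ v ∈ s, 0 ≤ f ⬝ᵥ v) → 0 ≤ f ⬝ᵥ h) :
    h ∈ PointedCone.hull ℝ s := by
  classical
  by_contra hh
  let C : ProperCone ℝ (κ → ℝ) := ⟨PointedCone.hull ℝ s, isClosed_hull_of_finite hs⟩
  obtain ⟨φ, hφC, hφh⟩ := C.hyperplane_separation_point hh
  have hφ : ∀ w, φ w = (fun i => φ (Pi.single i 1)) ⬝ᵥ w := fun w => by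
    conv_lhs => rw [pi_eq_sum_univ' w]
    simp [map_sum, dotProduct, mul_comm]
  have := H _ fun v hv => (hφ v) ▸ hφC v (PointedCone.subset_hull hv)
  linarith [hφ h]

section SignConstraints

variable {G : Type*}

def signCone (N P : Set G) : PointedCone ℝ (G → ℝ) where
  carrier := {f | (∀ x ∈ N, f x ≤ 0) ∧ ∀ x ∈ P, 0 ≤ f x}
  add_mem' hf hg := ⟨fun x hx => add_nonpos (hf.1 x hx) (hg.1 x hx),
    fun x hx => add_nonneg (hf.2 x hx) (hg.2 x hx)⟩
  zero_mem' := ⟨fun _ _ => le_rfl, fun _ _ => le_rfl⟩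
  smul_mem' c _ hf := ⟨fun x hx => mul_nonpos_of_nonneg_of_nonpos c.2 (hf.1 x hx),
    fun x hx => mul_nonneg c.2 (hf.2 x hx)⟩

lemma mem_signCone {N P : Set G} {f : G → ℝ} :
    f ∈ signCone N P ↔ (∀ x ∈ N, f x ≤ 0) ∧ ∀ x ∈ P, 0 ≤ f x :=
  Iff.rfl

lemma mul_nonpos_of_mem_signCone {N P N' P' : Set G} {f g : G → ℝ} (hf : f ∈ signCone N P)
    (hg : g ∈ signCone N' P') {x : G} (hN : x ∈ N' ↔ x ∉ N) (hP : x ∈ P' ↔ x ∉ P) :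
    f x * g x ≤ 0 := by
  by_cases hxN : x ∈ N <;> by_cases hxP : x ∈ P
  · rw [le_antisymm (hf.1 x hxN) (hf.2 x hxP), zero_mul]
  · exact mul_nonpos_of_nonpos_of_nonneg (hf.1 x hxN) (hg.2 x (hP.2 hxP))
  · exact mul_nonpos_of_nonneg_of_nonpos (hf.2 x hxP) (hg.1 x (hN.2 hxN))
  · rw [le_antisymm (hg.1 x (hN.2 hxN)) (hg.2 x (hP.2 hxP)), mul_zero]

variable [AddCommGroup G]

lemma mem_iff_notMem_of_ne_zero {A A' : Set G} (hU : A ∪ A' = univ) (hI : A ∩ A' = {0})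
    {x : G} (hx : x ≠ 0) : x ∈ A' ↔ x ∉ A :=
  ⟨fun hA' hA => hx (hI.subset ⟨hA, hA'⟩), fun hA => (hU.symm.subset (mem_univ x)).resolve_left hA⟩

def evenPart (f : G → ℝ) : G → ℝ := fun x => (f x + f (-x)) / 2

lemma evenPart_apply_zero (f : G → ℝ) : evenPart f 0 = f 0 := by
  simp [evenPart]

lemma evenPart_mem_signCone {N P : Set G} (hN : -N = N) (hP : -P = P) {f : G → ℝ}
    (hf : f ∈ signCone N P) : evenPart f ∈ signCone N P := by
  have hneg : ∀ {S : Set G}, -S = S → ∀ x ∈ S, -x ∈ S := fun hS x hx =>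
    hS ▸ Set.neg_mem_neg.2 hx
  refine ⟨fun x hx => ?_, fun x hx => ?_⟩ <;> simp only [evenPart]
  · linarith [hf.1 x hx, hf.1 _ (hneg hN x hx)]
  · linarith [hf.2 x hx, hf.2 _ (hneg hP x hx)]

variable [Fintype G]

instance : Fintype (AddChar G Circle) :=
  Fintype.ofEquiv _ AddChar.circleEquivComplex.symm.toEquiv

lemma sum_evenPart (f : G → ℝ) : ∑ x, evenPart f x = ∑ x, f x := by
  have : ∑ x, f (-x) = ∑ x, f x := Fintype.sum_equiv (Equiv.neg G) _ _ fun _ => rfl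
  simp only [evenPart, ← Finset.sum_div, Finset.sum_add_distrib, this]
  ring

lemma sum_addChar_apply_eq_ite [DecidableEq G] (x : G) :
    ∑ γ : AddChar G Circle, (γ x : ℂ) = if x = 0 then (Fintype.card G : ℂ) else 0 := by
  rw [← AddChar.sum_apply_eq_ite x]
  exact Fintype.sum_equiv AddChar.circleEquivComplex.toEquiv _ _ fun _ => rfl

lemma sum_addChar_nonneg (γ : AddChar G Circle) : 0 ≤ ∑ x, (γ x : ℂ) := by
  classical
  have := AddChar.sum_eq_ite (AddChar.circleEquivComplex γ)
  change ∑ x, (γ x : ℂ) = _ at this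
  rw [this]
  split_ifs <;> simp

lemma ftrans_one (f : G → ℝ) : ftrans f 1 = ((∑ x, f x : ℝ) : ℂ) := by
  simp [ftrans]

lemma sum_ftrans (f : G → ℝ) :
    ∑ γ : AddChar G Circle, ftrans f γ = ((Fintype.card G * f 0 : ℝ) : ℂ) := by
  classical
  simp only [ftrans]
  rw [Finset.sum_comm]
  simp [← Finset.sum_mul, sum_addChar_apply_eq_ite]

lemma sum_ftrans_mul_conj (f g : G → ℝ) :
    ∑ γ : AddChar G Circle, ftrans f γ * starRingEnd ℂ (ftrans g γ)
      = ((Fintype.card G * ∑ x, f x * g x : ℝ) : ℂ) := by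
  classical
  have hconj : ∀ (γ : AddChar G Circle) y, starRingEnd ℂ (γ y : ℂ) = γ (-y) := fun γ y => by
    rw [AddChar.map_neg_eq_inv, Circle.coe_inv_eq_conj]
  have hexpand : ∀ γ : AddChar G Circle, ftrans f γ * starRingEnd ℂ (ftrans g γ)
      = ∑ x, ∑ y, (γ (x - y) : ℂ) * ((f x * g y : ℝ) : ℂ) := fun γ => by
    simp only [ftrans, map_sum, map_mul, Complex.conj_ofReal, hconj, Finset.sum_mul_sum,
      sub_eq_add_neg, AddChar.map_add_eq_mul, Circle.coe_mul, Complex.ofReal_mul]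
    refine Finset.sum_congr rfl fun x _ => Finset.sum_congr rfl fun y _ => by ring
  have hsum : ∀ x, ∑ γ : AddChar G Circle, ∑ y, (γ (x - y) : ℂ) * ((f x * g y : ℝ) : ℂ)
      = Fintype.card G * ((f x * g x : ℝ) : ℂ) := fun x => by
    rw [Finset.sum_comm]
    simp [← Finset.sum_mul, sum_addChar_apply_eq_ite, sub_eq_zero]
  simp only [hexpand]
  rw [Finset.sum_comm]
  simp only [hsum]
  push_cast
  rw [Finset.mul_sum]

lemma ftrans_add (f g : G → ℝ) (γ : AddChar G Circle) :
    ftrans (f + g) γ = ftrans f γ + ftrans g γ := by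
  simp [ftrans, mul_add, Finset.sum_add_distrib]

lemma ftrans_smul (c : ℝ) (f : G → ℝ) (γ : AddChar G Circle) :
    ftrans (c • f) γ = c * ftrans f γ := by
  simp [ftrans, Finset.mul_sum, mul_left_comm]

lemma ftrans_const (c : ℝ) (γ : AddChar G Circle) :
    ftrans (fun _ => c) γ = c * ∑ x, (γ x : ℂ) := by
  simp [ftrans, Finset.mul_sum, mul_comm]

lemma ftrans_comp_neg (f : G → ℝ) (γ : AddChar G Circle) :
    ftrans (fun x => f (-x)) γ = starRingEnd ℂ (ftrans f γ) := by
  simp only [ftrans, map_sum, map_mul, Complex.conj_ofReal, ← Circle.coe_inv_eq_conj,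
    ← AddChar.map_neg_eq_inv]
  exact Fintype.sum_equiv (Equiv.neg G) _ _ fun x => by simp

lemma ftrans_evenPart (f : G → ℝ) (γ : AddChar G Circle) :
    ftrans (evenPart f) γ = (ftrans f γ).re := by
  have : evenPart f = (2⁻¹ : ℝ) • (f + fun x => f (-x)) := by
    funext x; simp [evenPart]; ring
  rw [this, ftrans_smul, ftrans_add, ftrans_comp_neg, Complex.add_conj]
  push_cast
  ring

def reChar (γ : AddChar G Circle) : G → ℝ := fun x => (γ x : ℂ).re

lemma re_ftrans (f : G → ℝ) (γ : AddChar G Circle) : (ftrans f γ).re = f ⬝ᵥ reChar γ := by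
  simp [ftrans, Complex.re_sum, dotProduct, reChar, mul_comm]

lemma ftrans_reChar (γ γ' : AddChar G Circle) :
    ftrans (reChar γ) γ' = (2⁻¹ : ℝ) * (∑ x, ((γ' * γ) x : ℂ) + ∑ x, ((γ' * γ⁻¹) x : ℂ)) := by
  simp only [ftrans, reChar, Complex.re_eq_add_conj, ← Circle.coe_inv_eq_conj, AddChar.mul_apply,
    AddChar.inv_apply', Circle.coe_mul, ← Finset.sum_add_distrib, Finset.mul_sum]
  exact Finset.sum_congr rfl fun x _ => by push_cast; ring

lemma PosFT.sum_nonneg {f : G → ℝ} (hf : PosFT f) : 0 ≤ ∑ x, f x := by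
  simpa only [ftrans_one, Complex.zero_le_real] using hf 1

lemma PosFT.sum_le {f : G → ℝ} (hf : PosFT f) : ∑ x, f x ≤ Fintype.card G * f 0 := by
  have := Finset.single_le_sum (fun γ _ => hf γ) (Finset.mem_univ 1)
  rwa [sum_ftrans, ftrans_one, Complex.real_le_real] at this

lemma PosFT.apply_zero_nonneg {f : G → ℝ} (hf : PosFT f) : 0 ≤ f 0 := by
  exact nonneg_of_mul_nonneg_right (hf.sum_nonneg.trans hf.sum_le)
    (by exact_mod_cast Fintype.card_pos)

lemma PosFT.sum_mul_sum_le {f g : G → ℝ} (hf : PosFT f) (hg : PosFT g) :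
    (∑ x, f x) * ∑ x, g x ≤ Fintype.card G * ∑ x, f x * g x := by
  have hterm : ∀ γ, 0 ≤ ftrans f γ * starRingEnd ℂ (ftrans g γ) := fun γ => by
    rw [Complex.conj_eq_iff_im.2 (Complex.nonneg_iff.1 (hg γ)).2.symm]
    exact mul_nonneg (hf γ) (hg γ)
  have := Finset.single_le_sum (fun γ _ => hterm γ) (Finset.mem_univ 1)
  rwa [sum_ftrans_mul_conj, ftrans_one, ftrans_one, Complex.conj_ofReal, ← Complex.ofReal_mul,
    Complex.real_le_real] at this

lemma posFT_const {c : ℝ} (hc : 0 ≤ c) : PosFT fun _ : G => c := fun γ => by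
  rw [ftrans_const]
  exact mul_nonneg (Complex.zero_le_real.2 hc) (sum_addChar_nonneg γ)

lemma posFT_reChar (γ : AddChar G Circle) : PosFT (reChar γ) := fun γ' => by
  rw [ftrans_reChar]
  exact mul_nonneg (Complex.zero_le_real.2 (by norm_num))
    (add_nonneg (sum_addChar_nonneg _) (sum_addChar_nonneg _))

lemma posFT_evenPart {f : G → ℝ} (hf : ∀ γ, 0 ≤ (ftrans f γ).re) : PosFT (evenPart f) :=
  fun γ => (ftrans_evenPart f γ).symm ▸ Complex.zero_le_real.2 (hf γ)

def posFTCone : PointedCone ℝ (G → ℝ) where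
  carrier := {f | PosFT f}
  add_mem' hf hg γ := by rw [ftrans_add]; exact add_nonneg (hf γ) (hg γ)
  zero_mem' γ := by simp [ftrans]
  smul_mem' c f hf γ := by
    rw [show c • f = (c : ℝ) • f from rfl, ftrans_smul]
    exact mul_nonneg (Complex.zero_le_real.2 c.2) (hf γ)

lemma one_div_card_le_of_mem_lamSet {S : Set (G → ℝ)} {r : ℝ} (hr : r ∈ lamSet S) :
    1 / (Fintype.card G : ℝ) ≤ r := by
  obtain ⟨f, -, hf, hne, rfl⟩ := hr
  have hpos : 0 < ∑ x, f x := hf.sum_nonneg.lt_of_ne' hne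
  rw [div_le_div_iff₀ (by exact_mod_cast Fintype.card_pos) hpos, one_mul, mul_comm]
  exact hf.sum_le

lemma bddBelow_lamSet (S : Set (G → ℝ)) : BddBelow (lamSet S) :=
  ⟨_, fun _ => one_div_card_le_of_mem_lamSet⟩

lemma one_div_card_le_mul_of_mem_lamSet {S S' : Set (G → ℝ)}
    (hSS' : ∀ f ∈ S, ∀ g ∈ S', ∀ x ≠ 0, f x * g x ≤ 0) {r s : ℝ} (hr : r ∈ lamSet S)
    (hs : s ∈ lamSet S') : 1 / (Fintype.card G : ℝ) ≤ r * s := by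
  classical
  obtain ⟨f, hfS, hf, hfne, rfl⟩ := hr
  obtain ⟨g, hgS, hg, hgne, rfl⟩ := hs
  have hfpos : 0 < ∑ x, f x := hf.sum_nonneg.lt_of_ne' hfne
  have hgpos : 0 < ∑ x, g x := hg.sum_nonneg.lt_of_ne' hgne
  have hoff : ∑ x, f x * g x ≤ f 0 * g 0 := by
    rw [← Finset.add_sum_erase _ _ (Finset.mem_univ 0), add_le_iff_nonpos_right]
    exact Finset.sum_nonpos fun x hx => hSS' f hfS g hgS x (Finset.ne_of_mem_erase hx)
  have hq : (0 : ℝ) < Fintype.card G := by exact_mod_cast Fintype.card_pos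
  rw [div_mul_div_comm, div_le_div_iff₀ hq (mul_pos hfpos hgpos), one_mul]
  calc (∑ x, f x) * ∑ x, g x ≤ Fintype.card G * ∑ x, f x * g x := hf.sum_mul_sum_le hg
    _ ≤ f 0 * g 0 * Fintype.card G := by rw [mul_comm]; gcongr

def lamSign (N P : Set G) : ℝ := sInf (lamSet {f | f ≠ 0 ∧ f ∈ signCone N P})

lemma lamSet_signCone_nonempty {N P : Set G} (hN : 0 ∉ N) :
    (lamSet {f | f ≠ 0 ∧ f ∈ signCone N P}).Nonempty := by
  classical
  refine ⟨_, Pi.single 0 1, ⟨?_, ?_, ?_⟩, fun γ => ?_, ?_, rfl⟩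
  · simp
  · intro x hx
    simp [show x ≠ 0 from fun h => hN (h ▸ hx)]
  · exact fun x _ => (Pi.single_nonneg.2 zero_le_one : (0 : G → ℝ) ≤ _) x
  · simp [ftrans, Pi.single_apply, apply_ite]
  · simp

lemma lamSign_pos {N P : Set G} (hN : 0 ∉ N) : 0 < lamSign N P :=
  (one_div_pos.2 (by exact_mod_cast Fintype.card_pos)).trans_le <|
    le_csInf (lamSet_signCone_nonempty hN) fun _ => one_div_card_le_of_mem_lamSet

lemma lamSign_mul_sum_le {N P : Set G} (hN : -N = N) (hP : -P = P) {f : G → ℝ}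
    (hre : ∀ γ, 0 ≤ (ftrans f γ).re) (hf : f ∈ signCone N P) : lamSign N P * ∑ x, f x ≤ f 0 := by
  have he := posFT_evenPart hre
  rw [← sum_evenPart, ← evenPart_apply_zero f]
  rcases he.sum_nonneg.eq_or_lt with hzero | hpos
  · rw [← hzero, mul_zero]
    exact he.apply_zero_nonneg
  · have hne : evenPart f ≠ 0 := fun h => by simp [h] at hpos
    exact (le_div_iff₀ hpos).1 <| csInf_le (bddBelow_lamSet _)
      ⟨evenPart f, ⟨hne, evenPart_mem_signCone hN hP hf⟩, he, hpos.ne', rfl⟩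

/-- A feasible point of the linear program dual to the one defining `lamSign N P`. -/
theorem exists_posFT_add_mem_signCone_eq [DecidableEq G] {N P : Set G} (hN : -N = N)
    (hP : -P = P) :
    ∃ F, PosFT F ∧ ∃ r ∈ signCone Pᶜ Nᶜ, F + r = Pi.single 0 1 - fun _ => lamSign N P := by
  let gens :=
    range reChar ∪ ((fun x => -Pi.single x (1 : ℝ)) '' N ∪ (fun x => Pi.single x 1) '' P)
  have hmem : Pi.single 0 1 - (fun _ => lamSign N P) ∈ PointedCone.hull ℝ gens := by
    refine mem_hull_of_forall_dotProduct_nonneg (toFinite gens) fun f hf => ?_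
    have hre : ∀ γ, 0 ≤ (ftrans f γ).re := fun γ =>
      (re_ftrans f γ).symm ▸ hf _ (Or.inl ⟨γ, rfl⟩)
    have hsign : f ∈ signCone N P :=
      ⟨fun x hx => by simpa using hf _ (Or.inr (Or.inl ⟨x, hx, rfl⟩)),
        fun x hx => by simpa using hf _ (Or.inr (Or.inr ⟨x, hx, rfl⟩))⟩
    have := lamSign_mul_sum_le hN hP hre hsign
    rw [dotProduct_sub, dotProduct_single, mul_one, dotProduct, ← Finset.sum_mul]
    linarith [mul_comm (lamSign N P) (∑ x, f x)]
  rw [PointedCone.hull, Submodule.span_union, Submodule.mem_sup] at hmem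
  obtain ⟨F, hF, r, hr, hFr⟩ := hmem
  refine ⟨F, (Submodule.span_le.2 ?_ hF : F ∈ posFTCone), r, Submodule.span_le.2 ?_ hr, hFr⟩
  · rintro _ ⟨γ, rfl⟩
    exact posFT_reChar γ
  · rintro _ (⟨x, hx, rfl⟩ | ⟨x, hx, rfl⟩)
    · refine ⟨fun y _ => ?_, fun y hy => ?_⟩
      · simpa using (Pi.single_nonneg.2 zero_le_one : (0 : G → ℝ) ≤ Pi.single x 1) y
      · simp [Pi.single_eq_of_ne (fun h : y = x => hy (h ▸ hx))]
    · refine ⟨fun y hy => ?_, fun y _ => ?_⟩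
      · simp [Pi.single_eq_of_ne (fun h : y = x => hy (h ▸ hx))]
      · exact (Pi.single_nonneg.2 zero_le_one : (0 : G → ℝ) ≤ Pi.single x 1) y

lemma lamSign_mul_lamSign_le {N P N' P' : Set G} (hN0 : 0 ∉ N) (hN'0 : 0 ∉ N') (hN : -N = N)
    (hP : -P = P) (hNN' : ∀ x ∈ N', x ∉ N) (hPP' : ∀ x ∈ P', x ≠ 0 → x ∉ P) :
    lamSign N P * lamSign N' P' ≤ 1 / (Fintype.card G : ℝ) := by
  classical
  obtain ⟨F, hF, r, hr, hFr⟩ := exists_posFT_add_mem_signCone_eq hN hP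
  set L := lamSign N P
  have hL : 0 < L := lamSign_pos hN0
  have hq : (0 : ℝ) < Fintype.card G := by exact_mod_cast Fintype.card_pos
  set g : G → ℝ := F + fun _ => L
  have hg : PosFT g := posFTCone.add_mem hF (posFT_const hL.le)
  have hgr : ∀ y, g y = (Pi.single 0 1 : G → ℝ) y - r y := fun y => by
    have := congrFun hFr y
    simp only [Pi.add_apply, Pi.sub_apply] at this
    simp only [g, Pi.add_apply]
    linarith
  have hsum : Fintype.card G * L ≤ ∑ x, g x := by
    simp only [g, Pi.add_apply, Finset.sum_add_distrib, Finset.sum_const, Finset.card_univ,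
      nsmul_eq_mul]
    linarith [hF.sum_nonneg]
  have hgpos : 0 < ∑ x, g x := (mul_pos hq hL).trans_le hsum
  have hg0 : g 0 ≤ 1 := by
    simpa [hgr] using hr.2 0 hN0
  have hgsign : g ∈ signCone N' P' := by
    refine ⟨fun y hy => ?_, fun y hy => ?_⟩
    · have hy0 : y ≠ 0 := fun h => hN'0 (h ▸ hy)
      simpa [hgr, hy0] using hr.2 y (hNN' y hy)
    · rcases eq_or_ne y 0 with rfl | hy0
      · exact hg.apply_zero_nonneg
      · simpa [hgr, hy0] using hr.1 y (hPP' y hy hy0)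
  have hmem : g 0 / ∑ x, g x ∈ lamSet {f | f ≠ 0 ∧ f ∈ signCone N' P'} :=
    ⟨g, ⟨fun h => by simp [h] at hgpos, hgsign⟩, hg, hgpos.ne', rfl⟩
  calc L * lamSign N' P' ≤ L * (g 0 / ∑ x, g x) :=
        mul_le_mul_of_nonneg_left (csInf_le (bddBelow_lamSet _) hmem) hL.le
    _ ≤ L * (1 / (Fintype.card G * L)) := by gcongr
    _ = 1 / (Fintype.card G : ℝ) := by field_simp

lemma one_div_card_le_lamSign_mul_lamSign {N P N' P' : Set G} (hN0 : 0 ∉ N) (hN'0 : 0 ∉ N')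
    (hNN' : ∀ x ≠ 0, x ∈ N' ↔ x ∉ N) (hPP' : ∀ x ≠ 0, x ∈ P' ↔ x ∉ P) :
    1 / (Fintype.card G : ℝ) ≤ lamSign N P * lamSign N' P' :=
  le_csInf_mul_csInf (one_div_pos.2 (by exact_mod_cast Fintype.card_pos))
    (lamSet_signCone_nonempty hN0) (lamSet_signCone_nonempty hN'0)
    (fun _ hs => (one_div_pos.2 (by exact_mod_cast Fintype.card_pos)).trans_le
      (one_div_card_le_of_mem_lamSet hs))
    fun _ hr _ hs => one_div_card_le_mul_of_mem_lamSet
      (fun _ hf _ hg x hx => mul_nonpos_of_mem_signCone hf.2 hg.2 (hNN' x hx) (hPP' x hx)) hr hs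

theorem lamSign_mul_lamSign {N P N' P' : Set G} (hN0 : 0 ∉ N) (hN'0 : 0 ∉ N') (hN : -N = N)
    (hP : -P = P) (hNN' : ∀ x ≠ 0, x ∈ N' ↔ x ∉ N) (hPP' : ∀ x ≠ 0, x ∈ P' ↔ x ∉ P) :
    lamSign N P * lamSign N' P' = 1 / (Fintype.card G : ℝ) :=
  le_antisymm
    (lamSign_mul_lamSign_le hN0 hN'0 hN hP
      (fun x hx => (hNN' x fun h => hN'0 (h ▸ hx)).1 hx) fun x hx hx0 => (hPP' x hx0).1 hx)
    (one_div_card_le_lamSign_mul_lamSign hN0 hN'0 hNN' hPP')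

lemma lam_eq_lamSign (A : Set G) : lam A = lamSign Aᶜ Aᶜ := by
  simp only [lam, lamSign, mem_signCone, mem_compl_iff, ← forall_and, ← le_antisymm_iff]

lemma lamMinus_eq_lamSign (A : Set G) : lamMinus A = lamSign Aᶜ ∅ := by
  simp [lamMinus, lamSign, mem_signCone]

lemma lamPlus_eq_lamSign (A : Set G) : lamPlus A = lamSign Aᶜ univ := by
  unfold lamPlus lamSign
  congr 2
  ext f
  simp only [mem_ofPred_eq, mem_signCone, mem_compl_iff, mem_univ, forall_const,
    and_congr_right_iff]
  refine fun _ => ⟨fun ⟨h0, hA⟩ => ⟨fun x hx => (h0 x hx).le, fun x => ?_⟩,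
    fun ⟨hle, hge⟩ => ⟨fun x hx => le_antisymm (hle x hx) (hge x), fun x _ => hge x⟩⟩
  by_cases hx : x ∈ A
  exacts [hA x hx, (h0 x hx).ge]

lemma lamPM_eq_lamSign (A : Set G) : lamPM A = lamSign Aᶜ A := rfl

end SignConstraints

theorem stmt8 {G : Type*} [AddCommGroup G] [Fintype G]
    (A A' : Set G) (hA : IsStandard A) (hA' : IsStandard A')
    (hU : A ∪ A' = Set.univ) (hI : A ∩ A' = {0}) :
    lam A * lam A' = 1 / (Fintype.card G : ℝ) ∧
    lamMinus A * lamPlus A' = 1 / (Fintype.card G : ℝ) ∧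
    lamPM A * lamPM A' = 1 / (Fintype.card G : ℝ) := by
  have h0 : (0 : G) ∉ Aᶜ := not_not.2 hA.2
  have h0' : (0 : G) ∉ A'ᶜ := not_not.2 hA'.2
  have hneg : -Aᶜ = Aᶜ := by rw [Set.compl_neg, ← hA.1]
  have hcompl : ∀ x ≠ 0, x ∈ A' ↔ x ∉ A := fun _ => mem_iff_notMem_of_ne_zero hU hI
  have hcompl' : ∀ x ≠ 0, x ∈ A'ᶜ ↔ x ∉ Aᶜ := fun x hx => by simp [hcompl x hx]
  rw [lam_eq_lamSign, lam_eq_lamSign, lamMinus_eq_lamSign, lamPlus_eq_lamSign, lamPM_eq_lamSign,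
    lamPM_eq_lamSign]
  exact ⟨lamSign_mul_lamSign h0 h0' hneg hneg hcompl' hcompl',
    lamSign_mul_lamSign h0 h0' hneg Set.neg_empty hcompl' (by simp),
    lamSign_mul_lamSign h0 h0' hneg hA.1.symm hcompl' hcompl⟩
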